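/- The intersection of the A^G-orbit of f with X is exactly the line through f: (A^G·f) ∩ X = ℂ·f, where A^G·f := {D f : D ∈ A^G}. (Intermediate claim in the proof of Theorem 2.2, part 1.) -/
import Mathlib


/-- Conjugation action of a group element on endomorphisms of `L`:
`g · T := ρ(g) ∘ T ∘ ρ(g)⁻¹`. -/
def conjEnd {G L : Type*} [Group G] [AddCommGroup L] [Module ℂ L]
    (ρ : Representation ℂ G L) (g : G) :
    Module.End ℂ L →ₗ[ℂ] Module.End ℂ L where
  toFun T := ρ g ∘ₗ T ∘ₗ ρ g⁻¹
  map_add' T S := by ext v; simp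
  map_smul' c T := by ext v; simp

/-- **Intermediate claim in the proof of Theorem 2.2, part 1.**
If `X` is an irreducible `G`-invariant subspace of `L` and `f ∈ X` is nonzero,
then the intersection of the `A^G`-orbit `A^G·f` with `X` is exactly the
complex line through `f`. -/
theorem orbit_inter_irreducible_eq_line
    {G L : Type*} [Group G] [AddCommGroup L] [Module ℂ L]
    (ρ : Representation ℂ G L)
    -- `L` has countable dimension
    (hcount : ∃ s : Set L, s.Countable ∧ Submodule.span ℂ s = ⊤)
    -- the `G`-action on `L` is locally finite
    (hlocfin : ∀ v : L, ∃ Y : Submodule ℂ L,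
      (∀ g : G, ∀ y ∈ Y, ρ g y ∈ Y) ∧ FiniteDimensional ℂ Y ∧ v ∈ Y)
    -- the `G`-action on `L` is completely reducible
    (hcompred : ∀ p : Submodule ℂ L, (∀ g : G, ∀ y ∈ p, ρ g y ∈ p) →
      ∃ q : Submodule ℂ L, (∀ g : G, ∀ y ∈ q, ρ g y ∈ q) ∧ IsCompl p q)
    (A : Subalgebra ℂ (Module.End ℂ L))
    -- `A` acts irreducibly on `L`
    (hAirr : ∀ p : Submodule ℂ L, (∀ T ∈ A, ∀ x ∈ p, T x ∈ p) → p = ⊥ ∨ p = ⊤)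
    -- `A` is invariant under the conjugation `G`-action
    (hAG : ∀ g : G, ∀ T ∈ A, conjEnd ρ g T ∈ A)
    -- the `G`-action on `A` is locally finite
    (hAlocfin : ∀ T ∈ A, ∃ E : Submodule ℂ (Module.End ℂ L),
      E ≤ Subalgebra.toSubmodule A ∧ (∀ g : G, ∀ S ∈ E, conjEnd ρ g S ∈ E) ∧
      FiniteDimensional ℂ E ∧ T ∈ E)
    -- the `G`-action on `A` is completely reducible
    (hAcompred : ∀ p : Submodule ℂ (Module.End ℂ L),
      p ≤ Subalgebra.toSubmodule A → (∀ g : G, ∀ S ∈ p, conjEnd ρ g S ∈ p) →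
      ∃ q : Submodule ℂ (Module.End ℂ L), q ≤ Subalgebra.toSubmodule A ∧
        (∀ g : G, ∀ S ∈ q, conjEnd ρ g S ∈ q) ∧
        p ⊓ q = ⊥ ∧ p ⊔ q = Subalgebra.toSubmodule A)
    -- `X` is a nonzero `G`-invariant subspace of `L`, irreducible as a `G`-module
    (X : Submodule ℂ L) (hXne : X ≠ ⊥)
    (hXinv : ∀ g : G, ∀ x ∈ X, ρ g x ∈ X)
    (hXirr : ∀ p : Submodule ℂ L, p ≤ X → (∀ g : G, ∀ x ∈ p, ρ g x ∈ p) →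
      p = ⊥ ∨ p = X)
    -- `f` is a nonzero element of `X`
    (f : L) (hf : f ∈ X) (hf0 : f ≠ 0) :
    {y : L | ∃ D ∈ A, (∀ g : G, conjEnd ρ g D = D) ∧ D f = y} ∩ (X : Set L) =
      {y : L | ∃ c : ℂ, y = c • f} := by

  -- basic fact: ρ g (ρ g⁻¹ v) = v and ρ g⁻¹ (ρ g v) = v
  have hinv1 : ∀ (g : G) (v : L), ρ g (ρ g⁻¹ v) = v := by
    intro g v
    have : (ρ g * ρ g⁻¹) v = v := by rw [← map_mul, mul_inv_cancel, map_one]; rfl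
    simpa using this
  have hinv2 : ∀ (g : G) (v : L), ρ g⁻¹ (ρ g v) = v := by
    intro g v
    have : (ρ g⁻¹ * ρ g) v = v := by rw [← map_mul, inv_mul_cancel, map_one]; rfl
    simpa using this
  -- `X` is finite-dimensional
  obtain ⟨Y, hYinv, hYfd, hfY⟩ := hlocfin f
  have hXY : X ≤ Y := by
    have hp := hXirr (X ⊓ Y) inf_le_left (by
      intro g x hx
      exact ⟨hXinv g x hx.1, hYinv g x hx.2⟩)
    rcases hp with hp | hp
    · exfalso
      have : f ∈ X ⊓ Y := ⟨hf, hfY⟩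
      rw [hp] at this
      exact hf0 this
    · intro x hx
      have : x ∈ X ⊓ Y := by rw [hp]; exact hx
      exact this.2
  haveI : FiniteDimensional ℂ Y := hYfd
  haveI hXfd : FiniteDimensional ℂ X := Submodule.finiteDimensional_of_le hXY
  haveI : Nontrivial X := ⟨⟨⟨f, hf⟩, 0, fun h => hf0 (congrArg Subtype.val h)⟩⟩
  ext y
  simp only [Set.mem_inter_iff, Set.mem_setOf_eq, SetLike.mem_coe]
  constructor
  · rintro ⟨⟨D, hDA, hDinv, hDf⟩, hyX⟩
    -- `D` is `G`-equivariant
    have hequiv : ∀ (g : G) (x : L), D (ρ g x) = ρ g (D x) := by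
      intro g x
      have h := congrFun (congrArg (fun (T : Module.End ℂ L) => (T : L → L)) (hDinv g)) (ρ g x)
      simp only [conjEnd, LinearMap.coe_mk, AddHom.coe_mk, LinearMap.coe_comp,
        Function.comp_apply] at h
      rw [hinv2 g x] at h
      exact h.symm
    -- `D` maps `X` into `X`
    have hmaps : ∀ x ∈ X, D x ∈ X := by
      have hp := hXirr (X ⊓ X.comap D) inf_le_left (by
        intro g x hx
        obtain ⟨hx1, hx2⟩ := Submodule.mem_inf.mp hx
        refine Submodule.mem_inf.mpr ⟨hXinv g x hx1, Submodule.mem_comap.mpr ?_⟩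
        rw [hequiv g x]
        exact hXinv g _ (Submodule.mem_comap.mp hx2))
      rcases hp with hp | hp
      · exfalso
        have : f ∈ X ⊓ X.comap D := Submodule.mem_inf.mpr ⟨hf, Submodule.mem_comap.mpr (by rw [hDf]; exact hyX)⟩
        rw [hp] at this
        exact hf0 this
      · intro x hx
        have : x ∈ X ⊓ X.comap D := by rw [hp]; exact hx
        exact this.2
    -- restrict `D` to `X` and find an eigenvalue
    set D' : Module.End ℂ X := D.restrict hmaps with hD'
    obtain ⟨c, hc⟩ := Module.End.exists_eigenvalue D'
    obtain ⟨v, hv⟩ := hc.exists_hasEigenvector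
    -- the eigenspace of `c` inside `X`, viewed in `L`
    set W : Submodule ℂ L := X ⊓ LinearMap.ker (D - c • (1 : Module.End ℂ L)) with hW
    have hWmem : ∀ x : L, x ∈ W ↔ x ∈ X ∧ D x = c • x := by
      intro x
      simp [hW, LinearMap.mem_ker, sub_eq_zero]
    have hWX : W = X := by
      have hp := hXirr W inf_le_left (by
        intro g x hx
        rw [hWmem] at hx ⊢
        refine ⟨hXinv g x hx.1, ?_⟩
        rw [hequiv g x, hx.2, map_smul])
      rcases hp with hp | hp
      · exfalso
        have hvW : (v : L) ∈ W := by
          rw [hWmem]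
          refine ⟨v.2, ?_⟩
          have := hv.apply_eq_smul
          have h2 := congrArg (Subtype.val : X → L) this
          simpa [hD', LinearMap.restrict_apply] using h2
        rw [hp] at hvW
        exact hv.2 (Subtype.ext hvW)
      · exact hp
    have hfW : f ∈ W := by rw [hWX]; exact hf
    rw [hWmem] at hfW
    exact ⟨c, by rw [← hDf, hfW.2]⟩
  · rintro ⟨c, rfl⟩
    refine ⟨⟨c • (1 : Module.End ℂ L), A.smul_mem A.one_mem c, ?_, by simp⟩,
      X.smul_mem c hf⟩
    intro g
    ext v
    simp only [conjEnd, LinearMap.coe_mk, AddHom.coe_mk, LinearMap.coe_comp,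
      Function.comp_apply, LinearMap.smul_apply, Module.End.one_apply, map_smul]
    rw [hinv1 g v]
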